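/- arXiv:2112.14945 — 2 statements merged into one kernel-verified Lean document; each statement's English description precedes it below -/
import Mathlib

section
/- A 3×3 real symmetric matrix A has symmetric Kapranov rank two if and only if it has symmetric tropical rank two. -/
/-!
Common definitions for tropical geometry of symmetric matrices, following
Develin–Santos–Sturmfels and the paper under formalization.
-/

open Matrix

noncomputable section

/-- The field `K` of Hahn series over `ℂ` with value group `ℝ`. -/
abbrev K : Type := HahnSeries ℝ ℂ

/-- The multiset of unordered pairs `{row s, col (σ s)}` (the "monomial") associated to the
bijection, from the row indices to the column indices, determined by the permutation `σ`. -/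
def tropPairs {n r : ℕ} (row col : Fin r → Fin n) (σ : Equiv.Perm (Fin r)) :
    Multiset (Sym2 (Fin n)) :=
  Finset.univ.val.map fun s => s(row s, col (σ s))

/-- The value `∑ s, A (row s) (col (σ s))` of the bijection determined by `σ` on the
submatrix of `A` with row indices `row` and column indices `col`. -/
def tropVal {n r : ℕ} (A : Matrix (Fin n) (Fin n) ℝ) (row col : Fin r → Fin n)
    (σ : Equiv.Perm (Fin r)) : ℝ :=
  ∑ s, A (row s) (col (σ s))

/-- The bijection determined by `σ` is minimizing for the submatrix of `A` given by
`row`, `col`. -/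
def Minimizing {n r : ℕ} (A : Matrix (Fin n) (Fin n) ℝ) (row col : Fin r → Fin n)
    (σ : Equiv.Perm (Fin r)) : Prop :=
  ∀ τ : Equiv.Perm (Fin r), tropVal A row col σ ≤ tropVal A row col τ

/-- The submatrix of `A` given by `row`, `col` is tropically singular: at least two distinct
bijections are minimizing. -/
def TropSing {n r : ℕ} (A : Matrix (Fin n) (Fin n) ℝ) (row col : Fin r → Fin n) : Prop :=
  ∃ σ τ : Equiv.Perm (Fin r), σ ≠ τ ∧ Minimizing A row col σ ∧ Minimizing A row col τ

/-- The submatrix of `A` given by `row`, `col` is symmetrically tropically singular: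
two bijections with distinct monomials (multisets of unordered pairs) are both minimizing. -/
def SymTropSing {n r : ℕ} (A : Matrix (Fin n) (Fin n) ℝ) (row col : Fin r → Fin n) : Prop :=
  ∃ σ τ : Equiv.Perm (Fin r), tropPairs row col σ ≠ tropPairs row col τ ∧
    Minimizing A row col σ ∧ Minimizing A row col τ

/-- The tropical rank of `A`: the largest `r` such that some `r × r` submatrix of `A`
(given by strictly increasing row and column indices) is not tropically singular. -/
def tropicalRank {n : ℕ} (A : Matrix (Fin n) (Fin n) ℝ) : ℕ :=
  sSup {r | ∃ row col : Fin r → Fin n, StrictMono row ∧ StrictMono col ∧ ¬ TropSing A row col}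

/-- The symmetric tropical rank of `A`: the largest `r` such that some `r × r` submatrix of `A`
is not symmetrically tropically singular. -/
def symTropicalRank {n : ℕ} (A : Matrix (Fin n) (Fin n) ℝ) : ℕ :=
  sSup {r | ∃ row col : Fin r → Fin n, StrictMono row ∧ StrictMono col ∧ ¬ SymTropSing A row col}

/-- `B` is a lift of the real matrix `A` over the Hahn series field `K`: all entries of `B`
are nonzero and the degree (least exponent of the support, `HahnSeries.order`) of `B i j`
equals `A i j`. -/
def IsLift {n : ℕ} (A : Matrix (Fin n) (Fin n) ℝ) (B : Matrix (Fin n) (Fin n) K) : Prop :=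
  ∀ i j, B i j ≠ 0 ∧ (B i j).order = A i j

/-- The Kapranov rank of `A`: the minimum rank of a lift of `A`. -/
def kapranovRank {n : ℕ} (A : Matrix (Fin n) (Fin n) ℝ) : ℕ :=
  sInf {r | ∃ B : Matrix (Fin n) (Fin n) K, IsLift A B ∧ B.rank = r}

/-- The symmetric Kapranov rank of `A`: the minimum rank of a symmetric lift of `A`. -/
def symKapranovRank {n : ℕ} (A : Matrix (Fin n) (Fin n) ℝ) : ℕ :=
  sInf {r | ∃ B : Matrix (Fin n) (Fin n) K, IsLift A B ∧ B.IsSymm ∧ B.rank = r}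

/-- Two permutations are cycle-similar if every cycle factor of either one is a cycle factor
of the other or the inverse of such. -/
def CycleSimilar {α : Type*} [Fintype α] [DecidableEq α] (σ τ : Equiv.Perm α) : Prop :=
  (∀ c ∈ σ.cycleFactorsFinset, c ∈ τ.cycleFactorsFinset ∨ c⁻¹ ∈ τ.cycleFactorsFinset) ∧
  (∀ c ∈ τ.cycleFactorsFinset, c ∈ σ.cycleFactorsFinset ∨ c⁻¹ ∈ σ.cycleFactorsFinset)

/-- The multiset of unordered pairs `{i, σ i}` of a permutation `σ` of `Fin n`. -/
def permPairs {n : ℕ} (σ : Equiv.Perm (Fin n)) : Multiset (Sym2 (Fin n)) :=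
  Finset.univ.val.map fun i => s(i, σ i)

/-- The value `∑ i, A i (σ i)` of a permutation `σ` on the full matrix `A`. -/
def permVal {n : ℕ} (A : Matrix (Fin n) (Fin n) ℝ) (σ : Equiv.Perm (Fin n)) : ℝ :=
  ∑ i, A i (σ i)

/-- `σ` attains the minimum of `∑ i, A i (σ i)` over all permutations. -/
def PermMinimizing {n : ℕ} (A : Matrix (Fin n) (Fin n) ℝ) (σ : Equiv.Perm (Fin n)) : Prop :=
  ∀ τ : Equiv.Perm (Fin n), permVal A σ ≤ permVal A τ


set_option synthInstance.maxHeartbeats 1000000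
set_option maxHeartbeats 1000000

/-! ### Auxiliary lemmas -/

lemma korder_eq {x : K} {e : ℝ} (h1 : x.coeff e ≠ 0) (h2 : ∀ a < e, x.coeff a = 0) :
    x ≠ 0 ∧ x.order = e := by
  have hx : x ≠ 0 := fun h => h1 (by simp [h])
  refine ⟨hx, le_antisymm (HahnSeries.order_le_of_coeff_ne_zero h1) ?_⟩
  by_contra h
  push_neg at h
  exact HahnSeries.coeff_order_eq_zero.not.2 hx (h2 _ h)

lemma rank_le_two_of_det {B : Matrix (Fin 3) (Fin 3) K} (h : B.det = 0) : B.rank ≤ 2 := by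
  obtain ⟨v, hv0, hv⟩ := (Matrix.exists_mulVec_eq_zero_iff).2 h
  have hker : 0 < Module.finrank K (LinearMap.ker B.mulVecLin) := by
    have : Nontrivial (LinearMap.ker B.mulVecLin) :=
      ⟨⟨⟨v, by simpa [Matrix.mulVecLin] using hv⟩, 0, by simpa using hv0⟩⟩
    exact (Module.finrank_pos_iff (R := K)).mpr this
  have := LinearMap.finrank_range_add_finrank_ker B.mulVecLin
  rw [Module.finrank_fin_fun] at this
  unfold Matrix.rank
  omega

lemma det_zero_of_rank_le_two {B : Matrix (Fin 3) (Fin 3) K} (h : B.rank ≤ 2) : B.det = 0 := by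
  by_contra hd
  have : IsUnit B := B.isUnit_iff_isUnit_det.2 (isUnit_iff_ne_zero.2 hd)
  have := B.rank_of_isUnit this
  simp [Fintype.card_fin] at this
  omega

lemma two_le_rank_of_minor {B : Matrix (Fin 3) (Fin 3) K} (i j k l : Fin 3)
    (h : B i k * B j l - B i l * B j k ≠ 0) : 2 ≤ B.rank := by
  have hS : (B.submatrix ![i,j] ![k,l]).rank = 2 := by
    have hd : (B.submatrix ![i,j] ![k,l]).det ≠ 0 := by
      rw [Matrix.det_fin_two]; simpa using h
    have := (B.submatrix ![i,j] ![k,l]).rank_of_isUnit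
      ((Matrix.isUnit_iff_isUnit_det _).2 (isUnit_iff_ne_zero.2 hd))
    simpa using this
  have hfac : B.submatrix ![i,j] ![k,l] =
      ((1 : Matrix (Fin 3) (Fin 3) K).submatrix ![i,j] (Equiv.refl (Fin 3))) * B *
      ((1 : Matrix (Fin 3) (Fin 3) K).submatrix (Equiv.refl (Fin 3)) ![k,l]) := by
    rw [Matrix.mul_submatrix_one, Matrix.one_submatrix_mul]
    ext a b
    rfl
  calc 2 = (B.submatrix ![i,j] ![k,l]).rank := hS.symm
    _ ≤ _ := by
        rw [hfac]
        exact le_trans (Matrix.rank_mul_le_left _ _)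
          (Matrix.rank_mul_le_right _ _)
def R1 (A : Matrix (Fin 3) (Fin 3) ℝ) : Prop := ∃ u : Fin 3 → ℝ, ∀ i j, A i j = u i + u j

lemma lift_exists (A : Matrix (Fin 3) (Fin 3) ℝ) (hA : A.IsSymm) :
    ∃ B : Matrix (Fin 3) (Fin 3) K, IsLift A B ∧ B.IsSymm := by
  refine ⟨Matrix.of fun i j => HahnSeries.single (A i j) (1 : ℂ), fun i j => ?_, ?_⟩
  · exact ⟨HahnSeries.single_ne_zero one_ne_zero, HahnSeries.order_single one_ne_zero⟩
  · ext i j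
    simp [Matrix.transpose_apply, hA.apply]

lemma lift_of_R1 {A : Matrix (Fin 3) (Fin 3) ℝ} (h : R1 A) :
    ∃ B : Matrix (Fin 3) (Fin 3) K, IsLift A B ∧ B.IsSymm ∧ B.rank ≤ 1 := by
  obtain ⟨u, hu⟩ := h
  set X : Matrix (Fin 3) (Fin 1) K := Matrix.of fun i _ => HahnSeries.single (u i) (1:ℂ) with hX
  set Y : Matrix (Fin 1) (Fin 3) K := Matrix.of fun _ j => HahnSeries.single (u j) (1:ℂ) with hY
  refine ⟨X * Y, fun i j => ?_, ?_, ?_⟩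
  · have : (X * Y) i j = HahnSeries.single (u i + u j) (1:ℂ) := by
      simp [Matrix.mul_apply, hX, hY, HahnSeries.single_mul_single]
    rw [this, hu i j]
    exact ⟨HahnSeries.single_ne_zero one_ne_zero, HahnSeries.order_single one_ne_zero⟩
  · ext i j
    simp [Matrix.transpose_apply, Matrix.mul_apply, hX, hY, HahnSeries.single_mul_single,
      add_comm]
  · calc (X * Y).rank ≤ X.rank := Matrix.rank_mul_le_left X Y
      _ ≤ 1 := by simpa using X.rank_le_card_width

lemma minor_eq_of_rank_le_one {B : Matrix (Fin 3) (Fin 3) K} (hr : B.rank ≤ 1)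
    (i j k l : Fin 3) : B i k * B j l = B i l * B j k := by
  by_contra h
  have h2 : 2 ≤ B.rank := two_le_rank_of_minor i j k l (sub_ne_zero.2 h)
  omega

lemma R1_of_lift_rank_le_one {A : Matrix (Fin 3) (Fin 3) ℝ} {B : Matrix (Fin 3) (Fin 3) K}
    (hA : A.IsSymm) (hB : IsLift A B) (hr : B.rank ≤ 1) : R1 A := by
  have key : ∀ i j k l : Fin 3, A i k + A j l = A i l + A j k := by
    intro i j k l
    have h := minor_eq_of_rank_le_one hr i j k l
    have h1 : (B i k * B j l).order = A i k + A j l := by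
      rw [HahnSeries.order_mul (hB i k).1 (hB j l).1, (hB i k).2, (hB j l).2]
    have h2 : (B i l * B j k).order = A i l + A j k := by
      rw [HahnSeries.order_mul (hB i l).1 (hB j k).1, (hB i l).2, (hB j k).2]
    rw [← h1, ← h2, h]
  refine ⟨fun i => A i 0 - A 0 0 / 2, fun i j => ?_⟩
  have := key i 0 0 j
  have hs := hA.apply j 0
  have hs2 := hA.apply 0 j
  linarith [key 0 i 0 j]

lemma D1 : ∀ σ τ : Equiv.Perm (Fin 3),
    (tropPairs (id : Fin 3 → Fin 3) id σ = tropPairs id id τ) ↔ (τ = σ ∨ τ = σ⁻¹) := by decide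
lemma D3 : ∀ σ : Equiv.Perm (Fin 3), σ⁻¹ ≠ σ → Equiv.Perm.sign σ = 1 := by decide

lemma tropVal_id {A : Matrix (Fin 3) (Fin 3) ℝ} (σ : Equiv.Perm (Fin 3)) :
    tropVal A (id : Fin 3 → Fin 3) id σ = ∑ i, A i (σ i) := rfl

lemma prod_perm_eq {B : Matrix (Fin 3) (Fin 3) K} (hBs : B.IsSymm) (σ : Equiv.Perm (Fin 3)) :
    (∏ i, B (σ⁻¹ i) i) = ∏ i, B (σ i) i := by
  rw [← Equiv.prod_comp σ (fun i => B (σ⁻¹ i) i)]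
  simp only [Equiv.Perm.inv_def, Equiv.symm_apply_apply]
  exact Finset.prod_congr rfl fun j _ => (hBs.apply j (σ j)).symm

lemma val_inv_eq {A : Matrix (Fin 3) (Fin 3) ℝ} (hA : A.IsSymm) (σ : Equiv.Perm (Fin 3)) :
    (∑ i, A i (σ⁻¹ i)) = ∑ i, A i (σ i) := by
  rw [← Equiv.sum_comp σ (fun i => A i (σ⁻¹ i))]
  simp only [Equiv.Perm.inv_def, Equiv.symm_apply_apply]
  exact Finset.sum_congr rfl fun j _ => (hA.apply (σ j) j).symm

lemma prod_order {A : Matrix (Fin 3) (Fin 3) ℝ} {B : Matrix (Fin 3) (Fin 3) K}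
    (hA : A.IsSymm) (hB : IsLift A B) (σ : Equiv.Perm (Fin 3)) :
    (∏ i, B (σ i) i) ≠ 0 ∧ (∏ i, B (σ i) i).order = ∑ i, A i (σ i) := by
  have e : (∑ i, A i (σ i)) = ∑ i, A (σ i) i :=
    Finset.sum_congr rfl fun i _ => hA.apply (σ i) i
  rw [Fin.prod_univ_three, e, Fin.sum_univ_three]
  have h0 := hB (σ 0) 0; have h1 := hB (σ 1) 1; have h2 := hB (σ 2) 2
  constructor
  · exact mul_ne_zero (mul_ne_zero h0.1 h1.1) h2.1
  · rw [HahnSeries.order_mul (mul_ne_zero h0.1 h1.1) h2.1,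
      HahnSeries.order_mul h0.1 h1.1, h0.2, h1.2, h2.2]

lemma symTropSing_of_singular_lift {A : Matrix (Fin 3) (Fin 3) ℝ}
    {B : Matrix (Fin 3) (Fin 3) K} (hA : A.IsSymm) (hB : IsLift A B) (hBs : B.IsSymm)
    (hdet : B.det = 0) : SymTropSing A (id : Fin 3 → Fin 3) id := by
  by_contra hns
  have hns' : ∀ σ τ : Equiv.Perm (Fin 3), Minimizing A id id σ → Minimizing A id id τ →
      tropPairs (id : Fin 3 → Fin 3) id σ = tropPairs id id τ := by
    intro σ τ h1 h2
    by_contra hne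
    exact hns ⟨σ, τ, hne, h1, h2⟩
  set v : Equiv.Perm (Fin 3) → ℝ := fun σ => ∑ i, A i (σ i) with hv
  obtain ⟨σ0, -, hσ0⟩ := Finset.exists_min_image Finset.univ v ⟨1, Finset.mem_univ 1⟩
  set m := v σ0 with hm
  have hminiff : ∀ π : Equiv.Perm (Fin 3), Minimizing A id id π ↔ v π = m := by
    intro π
    constructor
    · intro h
      exact le_antisymm (h σ0) (hσ0 π (Finset.mem_univ π))
    · intro h τ
      have : v π ≤ v τ := by rw [h]; exact hσ0 τ (Finset.mem_univ τ)
      exact this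
  have hmem : ∀ π : Equiv.Perm (Fin 3), v π = m → (π = σ0 ∨ π = σ0⁻¹) := by
    intro π h
    have := hns' π σ0 ((hminiff π).2 h) ((hminiff σ0).2 rfl)
    rcases (D1 π σ0).1 this with h' | h'
    · exact Or.inl h'.symm
    · right
      rw [h']
      simp
  have hinv : v σ0⁻¹ = m := val_inv_eq hA σ0
  have hfilter : Finset.univ.filter (fun σ => v σ = m) = {σ0, σ0⁻¹} := by
    ext π
    simp only [Finset.mem_filter, Finset.mem_univ, true_and, Finset.mem_insert,
      Finset.mem_singleton]
    constructor
    · exact hmem π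
    · rintro (rfl | rfl)
      · rfl
      · exact hinv
  have hcoeff : (B.det).coeff m = 0 := by rw [hdet]; rfl
  have hsum : (∑ σ : Equiv.Perm (Fin 3), Equiv.Perm.sign σ • ∏ i, B (σ i) i).coeff m =
      ∑ σ : Equiv.Perm (Fin 3), (Equiv.Perm.sign σ • ∏ i, B (σ i) i).coeff m := by
    have h := map_sum (HahnSeries.coeff.addMonoidHom m)
      (fun σ : Equiv.Perm (Fin 3) => Equiv.Perm.sign σ • ∏ i, B (σ i) i) Finset.univ
    simpa only [HahnSeries.coeff.addMonoidHom_apply] using h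
  rw [Matrix.det_apply, hsum] at hcoeff
  have hterm : ∀ σ : Equiv.Perm (Fin 3),
      ((Equiv.Perm.sign σ • ∏ i, B (σ i) i : K)).coeff m =
      if v σ = m then ((Equiv.Perm.sign σ : ℤ) : ℂ) * (∏ i, B (σ i) i).coeff m else 0 := by
    intro σ
    rw [Units.smul_def,
      show ((Equiv.Perm.sign σ : ℤ) • ∏ i, B (σ i) i : K).coeff m =
        (Equiv.Perm.sign σ : ℤ) • ((∏ i, B (σ i) i).coeff m) by
        simpa only [HahnSeries.coeff.addMonoidHom_apply] using
          AddMonoidHom.map_zsmul (HahnSeries.coeff.addMonoidHom m) (Equiv.Perm.sign σ : ℤ)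
            (∏ i, B (σ i) i)]
    by_cases h : v σ = m
    · rw [if_pos h, zsmul_eq_mul]
    · rw [if_neg h]
      have hord := prod_order hA hB σ
      have hlt : m < (∏ i, B (σ i) i).order := by
        rw [hord.2]
        rcases lt_or_eq_of_le (hσ0 σ (Finset.mem_univ σ)) with h' | h'
        · exact h'
        · exact absurd h'.symm h
      rw [HahnSeries.coeff_eq_zero_of_lt_order hlt, smul_zero]
  rw [Finset.sum_congr rfl fun σ _ => hterm σ, ← Finset.sum_filter, hfilter] at hcoeff
  have hc0 : (∏ i, B (σ0 i) i).coeff m ≠ 0 := by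
    have hord := prod_order hA hB σ0
    have : (∏ i, B (σ0 i) i).order = m := hord.2
    rw [← this]
    exact HahnSeries.coeff_order_eq_zero.not.2 hord.1
  rcases eq_or_ne σ0⁻¹ σ0 with h | h
  · rw [h, Finset.insert_eq_self.mpr (Finset.mem_singleton_self σ0), Finset.sum_singleton] at hcoeff
    rcases Int.units_eq_one_or (Equiv.Perm.sign σ0) with hs | hs <;>
      rw [hs] at hcoeff <;> simp at hcoeff <;> exact hc0 hcoeff
  · rw [Finset.sum_pair (fun hh => h hh.symm)] at hcoeff
    have hsign0 : Equiv.Perm.sign σ0 = 1 := D3 σ0 h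
    have hsign1 : Equiv.Perm.sign σ0⁻¹ = 1 := by
      apply D3
      rw [inv_inv]
      exact fun hh => h hh.symm
    have hPeq : (∏ i, B (σ0⁻¹ i) i) = ∏ i, B (σ0 i) i := prod_perm_eq hBs σ0
    rw [hsign0, hsign1, hPeq] at hcoeff
    simp at hcoeff
    exact hc0 hcoeff

lemma construct2 (A : Matrix (Fin 3) (Fin 3) ℝ) (hA : A.IsSymm) (m : ℝ)
    (hmin : ∀ π : Equiv.Perm (Fin 3), m ≤ ∑ i, A i (π i))
    (hfix : m = A 0 0 + A 1 1 + A 2 2 ∨ m = A 0 1 + A 1 0 + A 2 2)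
    (hmov : m = A 0 0 + A 1 2 + A 2 1 ∨ m = A 0 2 + A 1 1 + A 2 0 ∨
      m = A 0 1 + A 1 2 + A 2 0) :
    ∃ B : Matrix (Fin 3) (Fin 3) K, IsLift A B ∧ B.IsSymm ∧ B.det = 0 := by
  have hp : A 1 0 = A 0 1 := (hA.apply 1 0).symm
  have hq : A 2 0 = A 0 2 := (hA.apply 2 0).symm
  have hr : A 2 1 = A 1 2 := (hA.apply 2 1).symm
  set a := A 0 0 with ha
  set b := A 1 1 with hb
  set c := A 2 2 with hc
  set p := A 0 1 with hpp
  set q := A 0 2 with hqq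
  set r := A 1 2 with hrr
  -- instantiate hmin at the five permutation classes
  have h1 : m ≤ a + b + c := by
    have := hmin 1
    rwa [Fin.sum_univ_three] at this
  have h2 : m ≤ p + p + c := by
    have := hmin (Equiv.swap 0 1)
    rw [Fin.sum_univ_three] at this
    have e0 : (Equiv.swap (0:Fin 3) 1) 0 = 1 := by decide
    have e1 : (Equiv.swap (0:Fin 3) 1) 1 = 0 := by decide
    have e2 : (Equiv.swap (0:Fin 3) 1) 2 = 2 := by decide
    rwa [e0, e1, e2, hp] at this
  have h3 : m ≤ a + r + r := by
    have := hmin (Equiv.swap 1 2)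
    rw [Fin.sum_univ_three] at this
    have e0 : (Equiv.swap (1:Fin 3) 2) 0 = 0 := by decide
    have e1 : (Equiv.swap (1:Fin 3) 2) 1 = 2 := by decide
    have e2 : (Equiv.swap (1:Fin 3) 2) 2 = 1 := by decide
    rwa [e0, e1, e2, hr] at this
  have h4 : m ≤ q + b + q := by
    have := hmin (Equiv.swap 0 2)
    rw [Fin.sum_univ_three] at this
    have e0 : (Equiv.swap (0:Fin 3) 2) 0 = 2 := by decide
    have e1 : (Equiv.swap (0:Fin 3) 2) 1 = 1 := by decide
    have e2 : (Equiv.swap (0:Fin 3) 2) 2 = 0 := by decide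
    rwa [e0, e1, e2, hq] at this
  have h5 : m ≤ p + r + q := by
    have := hmin (finRotate 3)
    rw [Fin.sum_univ_three] at this
    have e0 : (finRotate 3) 0 = 1 := by decide
    have e1 : (finRotate 3) 1 = 2 := by decide
    have e2 : (finRotate 3) 2 = 0 := by decide
    rwa [e0, e1, e2, hq] at this
  rw [hp] at hfix
  rw [hr, hq] at hmov
  set μ := m - c with hμ
  have hμ1 : μ ≤ a + b := by linarith
  have hμ2 : μ ≤ p + p := by linarith
  have hμa : μ = a + b ∨ μ = p + p := by
    rcases hfix with h | h
    · left; linarith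
    · right; linarith
  set M : K := HahnSeries.single (a + b) (25:ℂ) - HahnSeries.single (p + p) 1 with hM
  set N : K := -(HahnSeries.single (a + r + r) (45:ℂ)) - HahnSeries.single (q + b + q) 5 +
      (HahnSeries.single (p + r + q) (3:ℂ) + HahnSeries.single (p + r + q) 3) with hN
  have hMcoeff : ∀ x : ℝ, M.coeff x =
      (if x = a + b then (25:ℂ) else 0) - (if x = p + p then 1 else 0) := by
    intro x
    rw [hM, HahnSeries.coeff_sub, HahnSeries.coeff_single, HahnSeries.coeff_single]
  have hNcoeff : ∀ x : ℝ, N.coeff x =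
      -(if x = a + r + r then (45:ℂ) else 0) - (if x = q + b + q then 5 else 0) +
      ((if x = p + r + q then (3:ℂ) else 0) + (if x = p + r + q then (3:ℂ) else 0)) := by
    intro x
    rw [hN, HahnSeries.coeff_add, HahnSeries.coeff_sub, HahnSeries.coeff_neg,
      HahnSeries.coeff_add, HahnSeries.coeff_single, HahnSeries.coeff_single,
      HahnSeries.coeff_single]
  have hMo : M ≠ 0 ∧ M.order = μ := by
    apply korder_eq
    · rw [hMcoeff]
      rcases hμa with h | h
      · rw [if_pos h]
        by_cases h' : μ = p + p
        · rw [if_pos h']; norm_num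
        · rw [if_neg h']; norm_num
      · rw [if_pos h]
        by_cases h' : μ = a + b
        · rw [if_pos h']; norm_num
        · rw [if_neg h']; norm_num
    · intro x hx
      rw [hMcoeff, if_neg (by intro h; rw [h] at hx; linarith),
        if_neg (by intro h; rw [h] at hx; linarith)]
      norm_num
  have hNo : N ≠ 0 ∧ N.order = m := by
    apply korder_eq
    · rw [hNcoeff]
      by_cases e1 : m = a + r + r <;> by_cases e2 : m = q + b + q <;>
          by_cases e3 : m = p + r + q
      · rw [if_pos e1, if_pos e2, if_pos e3]; norm_num
      · rw [if_pos e1, if_pos e2, if_neg e3]; norm_num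
      · rw [if_pos e1, if_neg e2, if_pos e3]; norm_num
      · rw [if_pos e1, if_neg e2, if_neg e3]; norm_num
      · rw [if_neg e1, if_pos e2, if_pos e3]; norm_num
      · rw [if_neg e1, if_pos e2, if_neg e3]; norm_num
      · rw [if_neg e1, if_neg e2, if_pos e3]; norm_num
      · exact absurd hmov (by tauto)
    · intro x hx
      rw [hNcoeff, if_neg (by intro h; rw [h] at hx; linarith),
        if_neg (by intro h; rw [h] at hx; linarith),
        if_neg (by intro h; rw [h] at hx; linarith)]
      norm_num
  set x : K := -N / M with hx
  have hx0 : x ≠ 0 := by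
    rw [hx]
    exact div_ne_zero (neg_ne_zero.2 hNo.1) hMo.1
  have hxM : x * M = -N := div_mul_cancel₀ (-N) hMo.1
  have hxord : x.order = c := by
    have h := HahnSeries.order_mul hx0 hMo.1
    rw [hxM, HahnSeries.order_neg, hNo.2, hMo.2] at h
    linarith
  refine ⟨!![HahnSeries.single a 5, HahnSeries.single p 1, HahnSeries.single q 1;
      HahnSeries.single p 1, HahnSeries.single b 5, HahnSeries.single r 3;
      HahnSeries.single q 1, HahnSeries.single r 3, x], ?_, ?_, ?_⟩
  · intro i j
    have h5ne : (5:ℂ) ≠ 0 := by norm_num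
    have h1ne : (1:ℂ) ≠ 0 := by norm_num
    have h3ne : (3:ℂ) ≠ 0 := by norm_num
    fin_cases i <;> fin_cases j
    · exact ⟨HahnSeries.single_ne_zero h5ne, HahnSeries.order_single h5ne⟩
    · exact ⟨HahnSeries.single_ne_zero h1ne, HahnSeries.order_single h1ne⟩
    · exact ⟨HahnSeries.single_ne_zero h1ne, HahnSeries.order_single h1ne⟩
    · exact ⟨HahnSeries.single_ne_zero h1ne, (HahnSeries.order_single h1ne).trans hp.symm⟩
    · exact ⟨HahnSeries.single_ne_zero h5ne, HahnSeries.order_single h5ne⟩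
    · exact ⟨HahnSeries.single_ne_zero h3ne, HahnSeries.order_single h3ne⟩
    · exact ⟨HahnSeries.single_ne_zero h1ne, (HahnSeries.order_single h1ne).trans hq.symm⟩
    · exact ⟨HahnSeries.single_ne_zero h3ne, (HahnSeries.order_single h3ne).trans hr.symm⟩
    · exact ⟨hx0, hxord⟩
  · ext i j
    fin_cases i <;> fin_cases j <;> rfl
  · have hdet3 : Matrix.det !![HahnSeries.single a 5, HahnSeries.single p 1,
        HahnSeries.single q 1;
        HahnSeries.single p 1, HahnSeries.single b 5, HahnSeries.single r 3;
        HahnSeries.single q 1, HahnSeries.single r 3, x] =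
        HahnSeries.single a 5 * HahnSeries.single b 5 * x
        - HahnSeries.single a 5 * HahnSeries.single r 3 * HahnSeries.single r 3
        - HahnSeries.single p 1 * HahnSeries.single p 1 * x
        + HahnSeries.single p 1 * HahnSeries.single r 3 * HahnSeries.single q 1
        + HahnSeries.single q 1 * HahnSeries.single p 1 * HahnSeries.single r 3
        - HahnSeries.single q 1 * HahnSeries.single b 5 * HahnSeries.single q 1 :=
      Matrix.det_fin_three _
    rw [hdet3]
    rw [show HahnSeries.single p (1:ℂ) * HahnSeries.single r 3 * HahnSeries.single q 1
        = HahnSeries.single (p + r + q) 3 by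
      rw [HahnSeries.single_mul_single, HahnSeries.single_mul_single]; norm_num]
    rw [show HahnSeries.single q (1:ℂ) * HahnSeries.single p 1 * HahnSeries.single r 3
        = HahnSeries.single (p + r + q) 3 by
      rw [HahnSeries.single_mul_single, HahnSeries.single_mul_single,
        show q + p + r = p + r + q by ring]
      norm_num]
    rw [show HahnSeries.single a (5:ℂ) * HahnSeries.single r 3 * HahnSeries.single r 3
        = HahnSeries.single (a + r + r) 45 by
      rw [HahnSeries.single_mul_single, HahnSeries.single_mul_single]; norm_num]
    rw [show HahnSeries.single q (1:ℂ) * HahnSeries.single b 5 * HahnSeries.single q 1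
        = HahnSeries.single (q + b + q) 5 by
      rw [HahnSeries.single_mul_single, HahnSeries.single_mul_single]; norm_num]
    rw [show HahnSeries.single a (5:ℂ) * HahnSeries.single b 5
        = HahnSeries.single (a + b) 25 by
      rw [HahnSeries.single_mul_single]; norm_num]
    rw [show HahnSeries.single p (1:ℂ) * HahnSeries.single p 1
        = HahnSeries.single (p + p) 1 by
      rw [HahnSeries.single_mul_single]; norm_num]
    have hgoal : HahnSeries.single (a+b) (25:ℂ) * x - HahnSeries.single (a+r+r) (45:ℂ)
        - HahnSeries.single (p+p) (1:ℂ) * x + HahnSeries.single (p+r+q) (3:ℂ)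
        + HahnSeries.single (p+r+q) (3:ℂ) - HahnSeries.single (q+b+q) (5:ℂ)
        = x * M + N := by
      rw [hM, hN]; ring
    rw [hgoal, hxM]
    ring

lemma D2 : ∀ σ τ : Equiv.Perm (Fin 3), ¬(τ = σ ∨ τ = σ⁻¹) →
    ∃ k, (σ k = k ∧ ¬ τ k = k) ∨ (¬ σ k = k ∧ τ k = k) := by decide
lemma D4 : ∀ π : Equiv.Perm (Fin 3), π 2 = 2 →
    (π 0 = 0 ∧ π 1 = 1 ∧ π 2 = 2) ∨ (π 0 = 1 ∧ π 1 = 0 ∧ π 2 = 2) := by decide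
lemma D5 : ∀ π : Equiv.Perm (Fin 3), π 2 ≠ 2 →
    (π 0 = 0 ∧ π 1 = 2 ∧ π 2 = 1) ∨ (π 0 = 2 ∧ π 1 = 1 ∧ π 2 = 0) ∨
    (π 0 = 1 ∧ π 1 = 2 ∧ π 2 = 0) ∨ (π 0 = 2 ∧ π 1 = 0 ∧ π 2 = 1) := by decide

lemma construct_aux {A : Matrix (Fin 3) (Fin 3) ℝ} (hA : A.IsSymm)
    (σ τ : Equiv.Perm (Fin 3)) (hσ : Minimizing A (id : Fin 3 → Fin 3) id σ)
    (hτ : Minimizing A (id : Fin 3 → Fin 3) id τ) (k : Fin 3)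
    (hfixk : σ k = k) (hmovk : τ k ≠ k) :
    ∃ B : Matrix (Fin 3) (Fin 3) K, IsLift A B ∧ B.IsSymm ∧ B.det = 0 := by
  set e : Equiv.Perm (Fin 3) := Equiv.swap k 2 with he
  have he2 : e 2 = k := Equiv.swap_apply_right k 2
  have hesk : e.symm k = 2 := by
    rw [Equiv.symm_apply_eq, he2]
  set A' : Matrix (Fin 3) (Fin 3) ℝ := A.submatrix e e with hA'def
  have hA' : A'.IsSymm := by
    ext i j
    exact hA.apply (e i) (e j)
  have happ : ∀ i j, A' i j = A (e i) (e j) := fun i j => rfl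
  set m : ℝ := ∑ i, A i (σ i) with hm
  have hval : ∀ π : Equiv.Perm (Fin 3),
      (∑ i, A' i (π i)) = ∑ j, A j (((e.symm.trans π).trans e) j) := by
    intro π
    rw [← Equiv.sum_comp e (fun j => A j (((e.symm.trans π).trans e) j))]
    refine Finset.sum_congr rfl fun i _ => ?_
    simp [happ]
  have hmin' : ∀ π : Equiv.Perm (Fin 3), m ≤ ∑ i, A' i (π i) := by
    intro π
    rw [hval π]
    exact hσ ((e.symm.trans π).trans e)
  -- conjugated σ
  set σ' : Equiv.Perm (Fin 3) := (e.trans σ).trans e.symm with hσ'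
  have hσ'val : (∑ i, A' i (σ' i)) = m := by
    rw [hval σ']
    refine Finset.sum_congr rfl fun j _ => ?_
    simp [hσ']
  have hσ'2 : σ' 2 = 2 := by
    simp [hσ', he2, hfixk, hesk]
  set τ' : Equiv.Perm (Fin 3) := (e.trans τ).trans e.symm with hτ'
  have hτ'val : (∑ i, A' i (τ' i)) = m := by
    rw [hval τ']
    have : (∑ j, A j (τ j)) = m := le_antisymm (hτ σ) (hσ τ)
    rw [← this]
    refine Finset.sum_congr rfl fun j _ => ?_
    simp [hτ']
  have hτ'2 : τ' 2 ≠ 2 := by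
    simp only [hτ', Equiv.trans_apply, he2]
    intro hh
    rw [Equiv.symm_apply_eq, he2] at hh
    exact hmovk hh
  have hfix : m = A' 0 0 + A' 1 1 + A' 2 2 ∨ m = A' 0 1 + A' 1 0 + A' 2 2 := by
    have hv := hσ'val
    rw [Fin.sum_univ_three] at hv
    rcases D4 σ' hσ'2 with ⟨h0, h1, h2⟩ | ⟨h0, h1, h2⟩
    · left; rw [h0, h1, h2] at hv; exact hv.symm
    · right; rw [h0, h1, h2] at hv; exact hv.symm
  have hmov : m = A' 0 0 + A' 1 2 + A' 2 1 ∨ m = A' 0 2 + A' 1 1 + A' 2 0 ∨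
      m = A' 0 1 + A' 1 2 + A' 2 0 := by
    have hv := hτ'val
    rw [Fin.sum_univ_three] at hv
    rcases D5 τ' hτ'2 with ⟨h0, h1, h2⟩ | ⟨h0, h1, h2⟩ | ⟨h0, h1, h2⟩ | ⟨h0, h1, h2⟩
    · left; rw [h0, h1, h2] at hv; exact hv.symm
    · right; left; rw [h0, h1, h2] at hv; exact hv.symm
    · right; right; rw [h0, h1, h2] at hv; exact hv.symm
    · right; right
      rw [h0, h1, h2] at hv
      rw [hA'.apply 2 0, hA'.apply 0 1, hA'.apply 1 2] at hv
      linarith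
  obtain ⟨B', hB'lift, hB'symm, hB'det⟩ := construct2 A' hA' m hmin' hfix hmov
  refine ⟨B'.submatrix e.symm e.symm, fun i j => ?_, ?_, ?_⟩
  · refine ⟨(hB'lift (e.symm i) (e.symm j)).1, ?_⟩
    rw [Matrix.submatrix_apply, (hB'lift (e.symm i) (e.symm j)).2, happ]
    simp
  · exact Matrix.ext fun i j => hB'symm.apply (e.symm i) (e.symm j)
  · rw [Matrix.det_submatrix_equiv_self e.symm B']
    exact hB'det

lemma singular_lift_of_symTropSing {A : Matrix (Fin 3) (Fin 3) ℝ} (hA : A.IsSymm)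
    (h : SymTropSing A (id : Fin 3 → Fin 3) id) :
    ∃ B : Matrix (Fin 3) (Fin 3) K, IsLift A B ∧ B.IsSymm ∧ B.det = 0 := by
  obtain ⟨σ, τ, hne, hσ, hτ⟩ := h
  have hne' : ¬(τ = σ ∨ τ = σ⁻¹) := fun hh => hne ((D1 σ τ).2 hh)
  obtain ⟨k, hk⟩ := D2 σ τ hne'
  rcases hk with ⟨h1, h2⟩ | ⟨h1, h2⟩
  · exact construct_aux hA σ τ hσ hτ k h1 h2
  · exact construct_aux hA τ σ hτ hσ k h2 h1

lemma D6 : ∀ π : Equiv.Perm (Fin 2), π = 1 ∨ π = Equiv.swap 0 1 := by decide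

lemma tropPairs_two (row col : Fin 2 → Fin 3) (σ : Equiv.Perm (Fin 2)) :
    tropPairs row col σ = {s(row 0, col (σ 0)), s(row 1, col (σ 1))} := by
  have huniv : (Finset.univ.val : Multiset (Fin 2)) = {0, 1} := rfl
  rw [tropPairs, huniv]
  rfl

lemma tropVal_two (A : Matrix (Fin 3) (Fin 3) ℝ) (row col : Fin 2 → Fin 3)
    (σ : Equiv.Perm (Fin 2)) :
    tropVal A row col σ = A (row 0) (col (σ 0)) + A (row 1) (col (σ 1)) := by
  rw [tropVal, Fin.sum_univ_two]

lemma swap2_eval : (Equiv.swap (0:Fin 2) 1) 0 = 1 ∧ (Equiv.swap (0:Fin 2) 1) 1 = 0 := by decide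

lemma tropPairs2_ne {row col : Fin 2 → Fin 3} (hr : row 0 < row 1) (hc : col 0 < col 1) :
    tropPairs row col 1 ≠ tropPairs row col (Equiv.swap 0 1) := by
  rw [tropPairs_two, tropPairs_two, swap2_eval.1, swap2_eval.2]
  intro h
  have hmem : s(row 0, col ((1 : Equiv.Perm (Fin 2)) 0)) ∈
      ({s(row 0, col 1), s(row 1, col 0)} : Multiset (Sym2 (Fin 3))) := by
    rw [← h]
    exact Multiset.mem_cons_self _ _
  have h10 : (1 : Equiv.Perm (Fin 2)) 0 = 0 := rfl
  rw [h10] at hmem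
  simp only [Multiset.insert_eq_cons, Multiset.mem_cons, Multiset.mem_singleton] at hmem
  rcases hmem with h' | h'
  · rw [Sym2.eq_iff] at h'
    rcases h' with ⟨-, h2⟩ | ⟨h1, h2⟩
    · exact absurd h2 hc.ne
    · exact hc.ne (h2.trans h1)
  · rw [Sym2.eq_iff] at h'
    rcases h' with ⟨h1, -⟩ | ⟨h1, h2⟩
    · exact absurd h1 hr.ne
    · exact hr.ne (h1.trans h2)

lemma symTropSing2_iff {A : Matrix (Fin 3) (Fin 3) ℝ} {row col : Fin 2 → Fin 3}
    (hr : row 0 < row 1) (hc : col 0 < col 1) :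
    SymTropSing A row col ↔
      A (row 0) (col 0) + A (row 1) (col 1) = A (row 0) (col 1) + A (row 1) (col 0) := by
  constructor
  · rintro ⟨σ, τ, hne, hσ, hτ⟩
    have hval : tropVal A row col σ = tropVal A row col τ := le_antisymm (hσ τ) (hτ σ)
    have hστ : σ ≠ τ := fun h => hne (h ▸ rfl)
    rcases D6 σ with rfl | rfl <;> rcases D6 τ with rfl | rfl
    · exact absurd rfl hστ
    · rw [tropVal_two, tropVal_two, swap2_eval.1, swap2_eval.2] at hval
      simpa using hval
    · rw [tropVal_two, tropVal_two, swap2_eval.1, swap2_eval.2] at hval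
      simpa using hval.symm
    · exact absurd rfl hστ
  · intro h
    refine ⟨1, Equiv.swap 0 1, tropPairs2_ne hr hc, ?_, ?_⟩ <;> intro π <;>
      rcases D6 π with rfl | rfl <;>
      simp only [tropVal_two, swap2_eval.1, swap2_eval.2, Equiv.Perm.one_apply] <;> linarith
lemma strictMono_pair {f : Fin 2 → Fin 3} (h : f 0 < f 1) : StrictMono f := by
  intro a b hab
  fin_cases a <;> fin_cases b
  · exact absurd hab (by decide)
  · exact h
  · exact absurd hab (by decide)
  · exact absurd hab (by decide)

lemma strictMono3_eq_id {f : Fin 3 → Fin 3} (h : StrictMono f) : f = id := by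
  have h01 : f 0 < f 1 := h (show (0:Fin 3) < 1 by decide)
  have h12 : f 1 < f 2 := h (show (1:Fin 3) < 2 by decide)
  rw [Fin.lt_def] at h01 h12
  have v0 : (f 0).val < 3 := (f 0).isLt
  have v1 : (f 1).val < 3 := (f 1).isLt
  have v2 : (f 2).val < 3 := (f 2).isLt
  have e0 : f 0 = 0 := Fin.ext (by omega)
  have e1 : f 1 = 1 := Fin.ext (by omega)
  have e2 : f 2 = 2 := Fin.ext (by omega)
  funext i
  fin_cases i
  · exact e0
  · exact e1
  · exact e2

lemma not_R1_of_ineq {A : Matrix (Fin 3) (Fin 3) ℝ} {row col : Fin 2 → Fin 3}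
    (h : A (row 0) (col 0) + A (row 1) (col 1) ≠ A (row 0) (col 1) + A (row 1) (col 0)) :
    ¬ R1 A := by
  rintro ⟨u, hu⟩
  apply h
  rw [hu, hu, hu, hu]
  ring

lemma R1_of_all {A : Matrix (Fin 3) (Fin 3) ℝ} (hA : A.IsSymm)
    (h : ∀ row col : Fin 2 → Fin 3, row 0 < row 1 → col 0 < col 1 →
      A (row 0) (col 0) + A (row 1) (col 1) = A (row 0) (col 1) + A (row 1) (col 0)) :
    R1 A := by
  refine ⟨fun i => A i 0 - A 0 0 / 2, fun i j => ?_⟩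
  have key : ∀ i j : Fin 3, A 0 0 + A i j = A 0 j + A i 0 := by
    intro i j
    rcases eq_or_ne i 0 with rfl | hi
    · linarith [hA.apply 0 j]
    · rcases eq_or_ne j 0 with rfl | hj
      · ring
      · have hi' : (0 : Fin 3) < i := Fin.pos_of_ne_zero hi
        have hj' : (0 : Fin 3) < j := Fin.pos_of_ne_zero hj
        have := h ![0, i] ![0, j] (by simpa using hi') (by simpa using hj')
        simpa using this
  have hj0 : A j 0 = A 0 j := (hA.apply j 0).symm
  linarith [key i j, hA.apply j 0, key j 0]

lemma symTrop_eq_two_iff {A : Matrix (Fin 3) (Fin 3) ℝ} (hA : A.IsSymm) :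
    symTropicalRank A = 2 ↔ ¬ R1 A ∧ SymTropSing A (id : Fin 3 → Fin 3) id := by
  set S : Set ℕ := {r | ∃ row col : Fin r → Fin 3,
    StrictMono row ∧ StrictMono col ∧ ¬ SymTropSing A row col} with hS
  have hbdd : BddAbove S := by
    refine ⟨3, fun r hr => ?_⟩
    obtain ⟨row, col, hrow, -, -⟩ := hr
    simpa using Fintype.card_le_of_injective row hrow.injective
  have h1S : 1 ∈ S := by
    refine ⟨fun _ => 0, fun _ => 0, ?_, ?_, ?_⟩
    · intro x y hxy
      exact absurd (Subsingleton.elim x y) hxy.ne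
    · intro x y hxy
      exact absurd (Subsingleton.elim x y) hxy.ne
    · rintro ⟨σ, τ, hne, -, -⟩
      exact hne (congrArg _ (Equiv.ext fun x => Subsingleton.elim (σ x) (τ x)))
  have hne : S.Nonempty := ⟨1, h1S⟩
  have two_iff : 2 ∈ S ↔ ¬ R1 A := by
    constructor
    · rintro ⟨row, col, hrow, hcol, hnot⟩
      have hr : row 0 < row 1 := hrow (show (0:Fin 2) < 1 by decide)
      have hc : col 0 < col 1 := hcol (show (0:Fin 2) < 1 by decide)
      exact not_R1_of_ineq fun hcontra => hnot ((symTropSing2_iff hr hc).2 hcontra)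
    · intro hnR1
      by_contra hnot
      apply hnR1
      apply R1_of_all hA
      intro row col hr hc
      by_contra hcontra
      exact hnot ⟨row, col, strictMono_pair hr, strictMono_pair hc,
        fun hs => hcontra ((symTropSing2_iff hr hc).1 hs)⟩
  constructor
  · intro h
    have h2 : 2 ∈ S := by
      have := Nat.sSup_mem hne hbdd
      rwa [show sSup S = 2 from h] at this
    refine ⟨two_iff.1 h2, ?_⟩
    by_contra hnot
    have h3 : 3 ∈ S := ⟨id, id, strictMono_id, strictMono_id, hnot⟩
    have : (3:ℕ) ≤ 2 := by
      rw [← show sSup S = 2 from h]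
      exact le_csSup hbdd h3
    omega
  · rintro ⟨hnR1, hsing⟩
    have h2 : 2 ∈ S := two_iff.2 hnR1
    have hb : ∀ r ∈ S, r ≤ 2 := by
      intro r hr
      obtain ⟨row, col, hrow, hcol, hnot⟩ := hr
      have hr3 : r ≤ 3 := by
        simpa using Fintype.card_le_of_injective row hrow.injective
      rcases Nat.lt_or_ge r 3 with h' | h'
      · omega
      · exfalso
        have : r = 3 := by omega
        subst this
        rw [strictMono3_eq_id hrow, strictMono3_eq_id hcol] at hnot
        exact hnot hsing
    exact le_antisymm (csSup_le hne hb) (le_csSup hbdd h2)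

lemma symKap_eq_two_iff {A : Matrix (Fin 3) (Fin 3) ℝ} (hA : A.IsSymm) :
    symKapranovRank A = 2 ↔
      ¬ R1 A ∧ ∃ B : Matrix (Fin 3) (Fin 3) K, IsLift A B ∧ B.IsSymm ∧ B.det = 0 := by
  set S : Set ℕ := {r | ∃ B : Matrix (Fin 3) (Fin 3) K, IsLift A B ∧ B.IsSymm ∧ B.rank = r}
    with hS
  have hne : S.Nonempty := by
    obtain ⟨B, hB, hBs⟩ := lift_exists A hA
    exact ⟨B.rank, B, hB, hBs, rfl⟩
  constructor
  · intro h
    have h2 : 2 ∈ S := by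
      have := Nat.sInf_mem hne
      rwa [show sInf S = 2 from h] at this
    obtain ⟨B, hB, hBs, hBr⟩ := h2
    constructor
    · intro hR1
      obtain ⟨B', hB', hB's, hB'r⟩ := lift_of_R1 hR1
      have hmem : B'.rank ∈ S := ⟨B', hB', hB's, rfl⟩
      have := Nat.sInf_le hmem
      rw [show sInf S = 2 from h] at this
      omega
    · exact ⟨B, hB, hBs, det_zero_of_rank_le_two (by omega)⟩
  · rintro ⟨hnR1, B, hB, hBs, hBd⟩
    have hrle : B.rank ≤ 2 := rank_le_two_of_det hBd
    have hrge : 2 ≤ B.rank := by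
      by_contra hcon
      exact hnR1 (R1_of_lift_rank_le_one hA hB (by omega))
    have h2 : 2 ∈ S := ⟨B, hB, hBs, by omega⟩
    have hb : ∀ r ∈ S, 2 ≤ r := by
      rintro r ⟨B', hB', hB's, rfl⟩
      by_contra hcon
      exact hnR1 (R1_of_lift_rank_le_one hA hB' (by omega))
    exact le_antisymm (Nat.sInf_le h2) (hb _ (Nat.sInf_mem hne))


/-- A `3 × 3` real symmetric matrix has symmetric Kapranov rank two iff it has
symmetric tropical rank two. -/
theorem stmt7 (A : Matrix (Fin 3) (Fin 3) ℝ) (hA : A.IsSymm) :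
    symKapranovRank A = 2 ↔ symTropicalRank A = 2 := by
  rw [symKap_eq_two_iff hA, symTrop_eq_two_iff hA]
  constructor
  · rintro ⟨hnR1, B, hB, hBs, hBd⟩
    exact ⟨hnR1, symTropSing_of_singular_lift hA hB hBs hBd⟩
  · rintro ⟨hnR1, hsing⟩
    exact ⟨hnR1, singular_lift_of_symTropSing hA hsing⟩


end
end

section
/- If there exists an n×n real symmetric matrix with symmetric tropical rank r−1 whose symmetric Kapranov rank is greater than r−1, then there exists an (n+1)×(n+1) real symmetric matrix with symmetric tropical rank r−1 whose symmetric Kapranov rank is greater than r−1. -/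
/-!
Common definitions for tropical geometry of symmetric matrices, following
Develin–Santos–Sturmfels and the paper under formalization.
-/

open Matrix

noncomputable section

/-! ### Auxiliary lemmas -/

section Aux

/-- Key multiset lemma: two families of unordered pairs that agree off `{s1, s2}` and
cross over there give distinct multisets. -/
lemma pairs_ne {N k : ℕ} (g h : Fin k → Sym2 (Fin N)) (s1 s2 : Fin k) (hs : s1 ≠ s2)
    (a b c1 c2 : Fin N) (hab : a ≠ b) (hc : c1 ≠ c2)
    (hg1 : g s1 = s(a, c1)) (hg2 : g s2 = s(b, c2))
    (hh1 : h s1 = s(a, c2)) (hh2 : h s2 = s(b, c1))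
    (hagree : ∀ s, s ≠ s1 → s ≠ s2 → g s = h s) :
    Multiset.map g Finset.univ.val ≠ Multiset.map h Finset.univ.val := by
  classical
  have hs2mem : s2 ∈ Finset.univ.val.erase s1 := by
    rw [Multiset.mem_erase_of_ne hs.symm]; exact Finset.mem_univ_val s2
  have hdecomp : (Finset.univ.val : Multiset (Fin k)) =
      s1 ::ₘ s2 ::ₘ ((Finset.univ.val.erase s1).erase s2) := by
    rw [Multiset.cons_erase hs2mem, Multiset.cons_erase (Finset.mem_univ_val s1)]
  have hrest : ∀ x ∈ (Finset.univ.val.erase s1).erase s2, g x = h x := by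
    intro x hx
    have hnd1 : (Finset.univ.val.erase s1).Nodup := Finset.univ.nodup.erase _
    have hx2 : x ≠ s2 ∧ x ∈ Finset.univ.val.erase s1 := (hnd1.mem_erase_iff).mp hx
    have hx1 : x ≠ s1 ∧ x ∈ (Finset.univ.val : Multiset (Fin k)) :=
      (Finset.univ.nodup.mem_erase_iff).mp hx2.2
    exact hagree x hx1.1 hx2.1
  intro hEq
  rw [hdecomp, Multiset.map_cons, Multiset.map_cons, Multiset.map_cons, Multiset.map_cons,
    Multiset.map_congr rfl hrest] at hEq
  set M := Multiset.map h ((Finset.univ.val.erase s1).erase s2) with hM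
  have hEq2 : (g s1 ::ₘ {g s2}) + M = (h s1 ::ₘ {h s2}) + M := by
    simpa [Multiset.cons_add, Multiset.singleton_add] using hEq
  have hpair : (g s1 ::ₘ {g s2}) = (h s1 ::ₘ {h s2}) := add_right_cancel hEq2
  rcases Multiset.cons_eq_cons.mp hpair with ⟨h1, _⟩ | ⟨_, cs, hcs1, _⟩
  · rw [hg1, hh1, Sym2.eq_iff] at h1
    rcases h1 with ⟨_, h1⟩ | ⟨h1, h1'⟩
    · exact hc h1
    · exact hc (h1'.trans h1)
  · rcases (Multiset.singleton_eq_cons_iff _).mp hcs1 with ⟨h1, _⟩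
    rw [hg2, hh1, Sym2.eq_iff] at h1
    rcases h1 with ⟨h1, _⟩ | ⟨h1, h1'⟩
    · exact hab h1.symm
    · exact hab (h1.trans h1').symm

/-- If two distinct rows of the submatrix are equal (as rows of `B`), the submatrix is
symmetrically tropically singular. -/
lemma symTropSing_of_eq_rows {N k : ℕ} (B : Matrix (Fin N) (Fin N) ℝ)
    (row col : Fin k → Fin N) (hrow : Function.Injective row) (hcol : Function.Injective col)
    (s1 s2 : Fin k) (hs : s1 ≠ s2) (heq : ∀ j, B (row s1) j = B (row s2) j) :
    SymTropSing B row col := by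
  classical
  obtain ⟨σ0, -, hσ0⟩ := Finset.exists_min_image Finset.univ (tropVal B row col)
    ⟨1, Finset.mem_univ 1⟩
  have hmin : Minimizing B row col σ0 := fun τ => hσ0 τ (Finset.mem_univ τ)
  set τ : Equiv.Perm (Fin k) := (Equiv.swap s1 s2).trans σ0 with hτ
  have hτapp : ∀ s, τ s = σ0 (Equiv.swap s1 s2 s) := fun s => rfl
  have hval : tropVal B row col τ = tropVal B row col σ0 := by
    have h1 : tropVal B row col τ =
        ∑ s, B (row (Equiv.swap s1 s2 s)) (col (σ0 (Equiv.swap s1 s2 s))) := by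
      refine Finset.sum_congr rfl fun s _ => ?_
      rw [hτapp]
      rcases eq_or_ne s s1 with rfl | h1
      · rw [Equiv.swap_apply_left]; exact heq _
      rcases eq_or_ne s s2 with rfl | h2
      · rw [Equiv.swap_apply_right]; exact (heq _).symm
      · rw [Equiv.swap_apply_of_ne_of_ne h1 h2]
    rw [h1]
    exact Equiv.sum_comp (Equiv.swap s1 s2) (fun s => B (row s) (col (σ0 s)))
  have hminτ : Minimizing B row col τ := fun ρ => hval ▸ hmin ρ
  refine ⟨σ0, τ, ?_, hmin, hminτ⟩
  have := pairs_ne (fun s => s(row s, col (σ0 s))) (fun s => s(row s, col (τ s)))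
    s1 s2 hs (row s1) (row s2) (col (σ0 s1)) (col (σ0 s2))
    (fun hh => hs (hrow hh)) (fun hh => hs (σ0.injective (hcol hh)))
    rfl rfl
    (by simp only [hτapp, Equiv.swap_apply_left])
    (by simp only [hτapp, Equiv.swap_apply_right])
    (fun s h1 h2 => by simp only [hτapp, Equiv.swap_apply_of_ne_of_ne h1 h2])
  simpa [tropPairs] using this

/-- If two distinct columns of the submatrix are equal (as columns of `B`), the submatrix is
symmetrically tropically singular. -/
lemma symTropSing_of_eq_cols {N k : ℕ} (B : Matrix (Fin N) (Fin N) ℝ)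
    (row col : Fin k → Fin N) (hrow : Function.Injective row) (hcol : Function.Injective col)
    (s1 s2 : Fin k) (hs : s1 ≠ s2) (heq : ∀ i, B i (col s1) = B i (col s2)) :
    SymTropSing B row col := by
  classical
  obtain ⟨σ0, -, hσ0⟩ := Finset.exists_min_image Finset.univ (tropVal B row col)
    ⟨1, Finset.mem_univ 1⟩
  have hmin : Minimizing B row col σ0 := fun τ => hσ0 τ (Finset.mem_univ τ)
  set τ : Equiv.Perm (Fin k) := σ0.trans (Equiv.swap s1 s2) with hτ
  have hτapp : ∀ s, τ s = Equiv.swap s1 s2 (σ0 s) := fun s => rfl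
  have hpt : ∀ s, B (row s) (col (τ s)) = B (row s) (col (σ0 s)) := by
    intro s
    rw [hτapp]
    rcases eq_or_ne (σ0 s) s1 with h1 | h1
    · rw [h1, Equiv.swap_apply_left]; exact (heq _).symm
    rcases eq_or_ne (σ0 s) s2 with h2 | h2
    · rw [h2, Equiv.swap_apply_right]; exact (heq _)
    · rw [Equiv.swap_apply_of_ne_of_ne h1 h2]
  have hval : tropVal B row col τ = tropVal B row col σ0 :=
    Finset.sum_congr rfl fun s _ => hpt s
  have hminτ : Minimizing B row col τ := fun ρ => hval ▸ hmin ρ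
  refine ⟨σ0, τ, ?_, hmin, hminτ⟩
  set t1 := σ0.symm s1 with ht1
  set t2 := σ0.symm s2 with ht2
  have hts : t1 ≠ t2 := fun hh => hs (by simpa [ht1, ht2] using congrArg σ0 hh)
  have hσt1 : σ0 t1 = s1 := Equiv.apply_symm_apply σ0 s1
  have hσt2 : σ0 t2 = s2 := Equiv.apply_symm_apply σ0 s2
  have := pairs_ne (fun s => s(row s, col (σ0 s))) (fun s => s(row s, col (τ s)))
    t1 t2 hts (row t1) (row t2) (col s1) (col s2)
    (fun hh => hts (hrow hh)) (fun hh => hs (hcol hh))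
    (by simp only [hσt1]) (by simp only [hσt2])
    (by simp only [hτapp, hσt1, Equiv.swap_apply_left])
    (by simp only [hτapp, hσt2, Equiv.swap_apply_right])
    (fun s h1 h2 => by
      have hn1 : σ0 s ≠ s1 := fun hh => h1 (by rw [ht1, ← hh, Equiv.symm_apply_apply])
      have hn2 : σ0 s ≠ s2 := fun hh => h2 (by rw [ht2, ← hh, Equiv.symm_apply_apply])
      simp only [hτapp, Equiv.swap_apply_of_ne_of_ne hn1 hn2])
  simpa [tropPairs] using this

lemma tropPairs_map {N n k : ℕ} (f : Fin N → Fin n) (row col : Fin k → Fin N)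
    (σ : Equiv.Perm (Fin k)) :
    tropPairs (f ∘ row) (f ∘ col) σ = Multiset.map (Sym2.map f) (tropPairs row col σ) := by
  simp [tropPairs, Multiset.map_map, Function.comp_def, Sym2.map_pair_eq]

lemma tropVal_comp {N n k : ℕ} (A : Matrix (Fin n) (Fin n) ℝ) (f : Fin N → Fin n)
    (row col : Fin k → Fin N) (σ : Equiv.Perm (Fin k)) :
    tropVal (A.submatrix f f) row col σ = tropVal A (f ∘ row) (f ∘ col) σ := rfl

/-- Transfer lemma (down to up): symmetric singularity of the collapsed submatrix gives
symmetric singularity upstairs. -/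
lemma symTropSing_up {N n k : ℕ} (A : Matrix (Fin n) (Fin n) ℝ) (f : Fin N → Fin n)
    (row col : Fin k → Fin N) (h : SymTropSing A (f ∘ row) (f ∘ col)) :
    SymTropSing (A.submatrix f f) row col := by
  obtain ⟨σ, τ, hne, hσ, hτ⟩ := h
  refine ⟨σ, τ, ?_, ?_, ?_⟩
  · intro hEq
    exact hne (by rw [tropPairs_map, tropPairs_map, hEq])
  · intro ρ; rw [tropVal_comp, tropVal_comp]; exact hσ ρ
  · intro ρ; rw [tropVal_comp, tropVal_comp]; exact hτ ρ

set_option synthInstance.maxHeartbeats 1000000 in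
/-- For a field, the rank of any double submatrix is at most the rank. -/
lemma rank_submatrix_le' {a b c d : ℕ} (M : Matrix (Fin a) (Fin b) K)
    (f : Fin c → Fin a) (g : Fin d → Fin b) :
    (M.submatrix f g).rank ≤ M.rank := by
  have hrow : ∀ (a' b' c' : ℕ) (M' : Matrix (Fin a') (Fin b') K) (f' : Fin c' → Fin a'),
      (M'.submatrix f' id).rank ≤ M'.rank := by
    intro a' b' c' M' f'
    rw [Matrix.rank_eq_finrank_span_row, Matrix.rank_eq_finrank_span_row]
    apply Submodule.finrank_mono
    apply Submodule.span_mono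
    rintro _ ⟨i, rfl⟩
    exact ⟨f' i, rfl⟩
  have h1 : (M.submatrix f g) = ((M.submatrix f id).submatrix id g) := rfl
  have h2 : ((M.submatrix f id).submatrix id g).rank ≤ (M.submatrix f id).rank := by
    rw [← Matrix.rank_transpose ((M.submatrix f id).submatrix id g),
      ← Matrix.rank_transpose (M.submatrix f id)]
    exact hrow _ _ _ (M.submatrix f id)ᵀ g
  exact h1 ▸ h2.trans (hrow _ _ _ M f)

lemma not_symTropSing_of_subsingleton {n k : ℕ} [Subsingleton (Equiv.Perm (Fin k))]
    (A : Matrix (Fin n) (Fin n) ℝ) (row col : Fin k → Fin n) :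
    ¬ SymTropSing A row col := by
  rintro ⟨σ, τ, hne, -, -⟩
  exact hne (by rw [Subsingleton.elim σ τ])

lemma not_injective_iff' {α β : Type*} (f : α → β) :
    ¬ Function.Injective f ↔ ∃ s1 s2, f s1 = f s2 ∧ s1 ≠ s2 := by
  unfold Function.Injective
  push_neg
  rfl

end Aux

/-- Corollary 3 of the paper: If there is an `n × n` symmetric matrix with
symmetric tropical rank `r - 1` and symmetric Kapranov rank greater than `r - 1`, then there is
an `(n+1) × (n+1)` such matrix. -/
theorem stmt16 (n r : ℕ)
    (h : ∃ A : Matrix (Fin n) (Fin n) ℝ, A.IsSymm ∧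
      symTropicalRank A = r - 1 ∧ r - 1 < symKapranovRank A) :
    ∃ B : Matrix (Fin (n + 1)) (Fin (n + 1)) ℝ, B.IsSymm ∧
      symTropicalRank B = r - 1 ∧ r - 1 < symKapranovRank B := by
  classical
  obtain ⟨A, hAsymm, hAtrop, hAkap⟩ := h
  -- Dispose of the degenerate case n = 0.
  rcases Nat.eq_zero_or_pos n with rfl | hn
  · exfalso
    have h0 : symKapranovRank A ≤ 0 := by
      refine Nat.sInf_le ⟨(1 : Matrix (Fin 0) (Fin 0) K), fun i j => i.elim0,
        Subsingleton.elim _ _, ?_⟩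
      have := Matrix.rank_le_card_height (1 : Matrix (Fin 0) (Fin 0) K)
      simpa using this
    omega
  obtain ⟨m, rfl⟩ : ∃ m, n = m + 1 := ⟨n - 1, by omega⟩
  -- The collapsing map and the duplication matrix.
  set f : Fin (m + 2) → Fin (m + 1) := fun i => ⟨min i.val m, by omega⟩ with hf
  have hfmono : Monotone f := by
    intro i j hij
    simp only [hf, Fin.le_def]
    have := (Fin.le_def).mp hij
    omega
  have hfcs : ∀ i : Fin (m + 1), f (Fin.castSucc i) = i := by
    intro i
    apply Fin.ext
    simp only [hf, Fin.coe_castSucc]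
    omega
  set B : Matrix (Fin (m + 2)) (Fin (m + 2)) ℝ := A.submatrix f f with hB
  have hBapp : ∀ i j, B i j = A (f i) (f j) := fun i j => rfl
  have hBsymm : B.IsSymm := by
    apply Matrix.IsSymm.ext
    intro i j
    rw [hBapp, hBapp]
    exact hAsymm.apply (f i) (f j)
  refine ⟨B, hBsymm, ?_, ?_⟩
  · -- symmetric tropical rank
    set SA := {k | ∃ row col : Fin k → Fin (m + 1), StrictMono row ∧ StrictMono col ∧
      ¬ SymTropSing A row col} with hSA
    set SB := {k | ∃ row col : Fin k → Fin (m + 2), StrictMono row ∧ StrictMono col ∧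
      ¬ SymTropSing B row col} with hSB
    have hSAbdd : BddAbove SA := by
      refine ⟨m + 1, ?_⟩
      rintro k ⟨row, col, hrow, -, -⟩
      have := Fintype.card_le_of_injective row hrow.injective
      simpa using this
    have hSAne : SA.Nonempty := by
      refine ⟨0, Fin.elim0, Fin.elim0, fun i => i.elim0, fun i => i.elim0, ?_⟩
      exact not_symTropSing_of_subsingleton A _ _
    have hsupA : sSup SA = r - 1 := hAtrop
    have hmemA : r - 1 ∈ SA := hsupA ▸ Nat.sSup_mem hSAne hSAbdd
    -- (i) r - 1 ∈ SB
    have hmemB : r - 1 ∈ SB := by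
      obtain ⟨row, col, hrow, hcol, hns⟩ := hmemA
      refine ⟨Fin.castSucc ∘ row, Fin.castSucc ∘ col,
        Fin.strictMono_castSucc.comp hrow, Fin.strictMono_castSucc.comp hcol, ?_⟩
      rintro ⟨σ, τ, hne, hσ, hτ⟩
      have hval : ∀ ρ : Equiv.Perm (Fin (r - 1)),
          tropVal B (Fin.castSucc ∘ row) (Fin.castSucc ∘ col) ρ = tropVal A row col ρ := by
        intro ρ
        refine Finset.sum_congr rfl fun s _ => ?_
        show B (Fin.castSucc (row s)) (Fin.castSucc (col (ρ s))) = _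
        rw [hBapp, hfcs, hfcs]
      refine hns ⟨σ, τ, ?_, ?_, ?_⟩
      · intro hEq
        refine hne ?_
        have h1 := tropPairs_map Fin.castSucc row col σ
        have h2 := tropPairs_map Fin.castSucc row col τ
        rw [h1, h2, hEq]
      · intro ρ; rw [← hval, ← hval]; exact hσ ρ
      · intro ρ; rw [← hval, ← hval]; exact hτ ρ
    -- (ii) every element of SB is at most r - 1
    have hboundB : ∀ k ∈ SB, k ≤ r - 1 := by
      rintro k ⟨row, col, hrow, hcol, hns⟩
      by_cases hinjr : Function.Injective (f ∘ row)
      · by_cases hinjc : Function.Injective (f ∘ col)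
        · -- genuine submatrix of A
          have hrow' : StrictMono (f ∘ row) :=
            Monotone.strictMono_of_injective (hfmono.comp hrow.monotone) hinjr
          have hcol' : StrictMono (f ∘ col) :=
            Monotone.strictMono_of_injective (hfmono.comp hcol.monotone) hinjc
          have hkA : k ∈ SA := by
            refine ⟨f ∘ row, f ∘ col, hrow', hcol', fun hsing => hns ?_⟩
            exact symTropSing_up A f row col hsing
          calc k ≤ sSup SA := le_csSup hSAbdd hkA
            _ = r - 1 := hsupA
        · -- two equal columns
          obtain ⟨s1, s2, hfc, hs⟩ := (not_injective_iff' _).mp hinjc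
          exact absurd (symTropSing_of_eq_cols B row col hrow.injective hcol.injective
            s1 s2 hs (fun i => by rw [hBapp, hBapp]; exact congrArg _ hfc)) hns
      · -- two equal rows
        obtain ⟨s1, s2, hfr, hs⟩ := (not_injective_iff' _).mp hinjr
        exact absurd (symTropSing_of_eq_rows B row col hrow.injective hcol.injective
          s1 s2 hs (fun j => by rw [hBapp, hBapp]
                                exact congrFun (congrArg A hfr) (f j))) hns
    show sSup SB = r - 1
    exact le_antisymm (csSup_le ⟨r - 1, hmemB⟩ hboundB) (le_csSup ⟨r - 1, hboundB⟩ hmemB)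
  · -- symmetric Kapranov rank
    set SKB := {k | ∃ L : Matrix (Fin (m + 2)) (Fin (m + 2)) K, IsLift B L ∧ L.IsSymm ∧
      L.rank = k} with hSKB
    have hSKBne : SKB.Nonempty := by
      set L0 : Matrix (Fin (m + 2)) (Fin (m + 2)) K :=
        fun i j => HahnSeries.single (B i j) (1 : ℂ) with hL0
      refine ⟨L0.rank, L0, ?_, ?_, rfl⟩
      · intro i j
        exact ⟨HahnSeries.single_ne_zero one_ne_zero, HahnSeries.order_single one_ne_zero⟩
      · apply Matrix.IsSymm.ext
        intro i j
        simp only [hL0]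
        rw [hBsymm.apply i j]
    have hmem : sInf SKB ∈ SKB := Nat.sInf_mem hSKBne
    obtain ⟨L, hLlift, hLsymm, hLrank⟩ := hmem
    have hlift' : IsLift A (L.submatrix Fin.castSucc Fin.castSucc) := by
      intro i j
      obtain ⟨hne, hord⟩ := hLlift (Fin.castSucc i) (Fin.castSucc j)
      refine ⟨hne, ?_⟩
      show (L (Fin.castSucc i) (Fin.castSucc j)).order = A i j
      rw [hord, hBapp, hfcs, hfcs]
    have hsymm' : (L.submatrix Fin.castSucc Fin.castSucc).IsSymm := by
      apply Matrix.IsSymm.ext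
      intro i j
      exact hLsymm.apply (Fin.castSucc i) (Fin.castSucc j)
    have hA_le : symKapranovRank A ≤ (L.submatrix Fin.castSucc Fin.castSucc).rank :=
      Nat.sInf_le ⟨L.submatrix Fin.castSucc Fin.castSucc, hlift', hsymm', rfl⟩
    have hrank_le : (L.submatrix Fin.castSucc Fin.castSucc).rank ≤ L.rank :=
      rank_submatrix_le' L Fin.castSucc Fin.castSucc
    show r - 1 < sInf SKB
    omega

end
end
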